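/- arXiv:2211.16621 — 5 statements merged into one kernel-verified Lean document; each statement's English description precedes it below -/
import Mathlib

section
/- Let C be a strictly convex domain in the plane, and let H1 = x1 + λ1·C and H2 = x2 + λ2·C be two homothets of C (λ1, λ2 > 0) whose intersection has nonempty interior and is reduced (i.e., neither homothet contains the other intersected set). Then the intersection of the boundaries of H1 and H2 contains exactly two points. -/
open Pointwise
open scoped RealInnerProductSpace

abbrev Plane := EuclideanSpace ℝ (Fin 2)

/-- A convex domain: compact, convex, with nonempty interior. -/
def IsConvexDomain (C : Set Plane) : Prop :=
  IsCompact C ∧ Convex ℝ C ∧ (interior C).Nonempty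

/-- A strictly convex domain: a convex domain where the open segment between any two
distinct boundary points lies in the interior. -/
def IsStrictConvexDomain (C : Set Plane) : Prop :=
  IsConvexDomain C ∧
    ∀ x ∈ frontier C, ∀ y ∈ frontier C, x ≠ y → openSegment ℝ x y ⊆ interior C

/-- `u` is an outer unit normal of a supporting line of `C` at `x`. -/
def IsOuterNormalAt (C : Set Plane) (x u : Plane) : Prop :=
  ‖u‖ = 1 ∧ ∀ y ∈ C, (inner ℝ u y : ℝ) ≤ inner ℝ u x

/-- A singular boundary point: a boundary point admitting two distinct supporting lines
(equivalently, two distinct outer unit normals). -/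
def IsSingularPt (C : Set Plane) (x : Plane) : Prop :=
  x ∈ frontier C ∧ ∃ u v : Plane, u ≠ v ∧ IsOuterNormalAt C x u ∧ IsOuterNormalAt C x v

/-- Smooth: every boundary point has a unique outer unit normal (unique supporting line). -/
def IsSmoothDomain (C : Set Plane) : Prop :=
  ∀ x ∈ frontier C, ∃! u : Plane, IsOuterNormalAt C x u

/-!
Lower bound: the frontier of `K = H1 ∩ H2` is a topological circle. Off `∂H1 ∩ ∂H2` it lies in
`interior H1 ∪ interior H2` and avoids `interior H1 ∩ interior H2 = interior K`; both parts are
nonempty because neither homothet contains the other, and a circle minus at most one point is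
connected.

Upper bound: if `l1 ≤ l2` then `H2 = H1 + B` with `B = (x2 - x1) +ᵥ (l2 - l1) • C`, and `0 ∉ B`
because `H1 ⊄ H2`. At a common boundary point `s` the support function `h_B = h_H2 - h_H1` is
`≥ 0` at an outer normal of `H1` and `≤ 0` at one of `H2`, so by the intermediate value theorem
some convex combination of the two is an outer normal `w` of `K` at `s` with `h_B(w) = 0`.
Distinct points get distinct normals by strict convexity of `K`, and the support function of a
compact planar set avoiding the origin vanishes at at most two unit vectors.
-/

open Set Metric Module
open scoped Topology

section Topology

variable {X : Type*} [TopologicalSpace X] {s t : Set X}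

lemma IsPreconnected.inter_frontier_nonempty (hs : IsPreconnected s) (h₁ : (s ∩ t).Nonempty)
    (h₂ : (s \ t).Nonempty) : (s ∩ frontier t).Nonempty := by
  by_contra h
  have hfr : ∀ x ∈ s, x ∉ frontier t := fun x hx hxt => h ⟨x, hx, hxt⟩
  obtain ⟨x, -, hx⟩ := hs _ _ isOpen_interior isClosed_closure.isOpen_compl
    (fun x hx => by
      by_cases hxt : x ∈ closure t
      · exact Or.inl (by rw [← closure_sdiff_frontier]; exact ⟨hxt, hfr x hx⟩)
      · exact Or.inr hxt)
    (h₁.imp fun x hx => ⟨hx.1, by rw [← self_sdiff_frontier]; exact ⟨hx.2, hfr x hx.1⟩⟩)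
    (h₂.imp fun x hx => ⟨hx.1, fun hxt => hx.2 <| interior_subset <| by
      rw [← closure_sdiff_frontier]; exact ⟨hxt, hfr x hx.1⟩⟩)
  exact hx.2 (interior_subset_closure hx.1)

end Topology

section SupportFunction

variable {E : Type*} [NormedAddCommGroup E] [InnerProductSpace ℝ E] {A B : Set E} {u v o z : E}

noncomputable def supportFun (A : Set E) (u : E) : ℝ :=
  sSup ((fun z => ⟪u, z⟫) '' A)

lemma supportFun_eq_of_isMaxOn (hz : z ∈ A) (h : IsMaxOn (fun y => ⟪u, y⟫) A z) :
    supportFun A u = ⟪u, z⟫ :=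
  IsGreatest.csSup_eq ⟨mem_image_of_mem _ hz, by rintro _ ⟨y, hy, rfl⟩; exact isMaxOn_iff.1 h y hy⟩

lemma exists_isMaxOn_inner (hA : IsCompact A) (hne : A.Nonempty) (u : E) :
    ∃ z ∈ A, IsMaxOn (fun y => ⟪u, y⟫) A z :=
  hA.exists_isMaxOn hne (continuous_const.inner continuous_id).continuousOn

lemma inner_le_supportFun (hA : IsCompact A) (hz : z ∈ A) (u : E) : ⟪u, z⟫ ≤ supportFun A u :=
  le_csSup (hA.image (continuous_const.inner continuous_id)).bddAbove (mem_image_of_mem _ hz)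

lemma continuous_supportFun (hA : IsCompact A) : Continuous (supportFun A) :=
  hA.continuous_sSup continuous_inner

lemma IsMaxOn.inner_smul_left (h : IsMaxOn (fun y => ⟪u, y⟫) A z) {c : ℝ} (hc : 0 ≤ c) :
    IsMaxOn (fun y => ⟪c • u, y⟫) A z :=
  isMaxOn_iff.2 fun y hy => by
    simp only [real_inner_smul_left]
    exact mul_le_mul_of_nonneg_left (isMaxOn_iff.1 h y hy) hc

lemma supportFun_smul (hA : IsCompact A) (hne : A.Nonempty) {c : ℝ} (hc : 0 ≤ c) (u : E) :
    supportFun A (c • u) = c * supportFun A u := by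
  obtain ⟨z, hz, hmax⟩ := exists_isMaxOn_inner hA hne u
  rw [supportFun_eq_of_isMaxOn hz hmax, supportFun_eq_of_isMaxOn hz (hmax.inner_smul_left hc),
    real_inner_smul_left]

lemma supportFun_add (hA : IsCompact A) (hAne : A.Nonempty) (hB : IsCompact B)
    (hBne : B.Nonempty) (u : E) : supportFun (A + B) u = supportFun A u + supportFun B u := by
  obtain ⟨a, ha, hmaxa⟩ := exists_isMaxOn_inner hA hAne u
  obtain ⟨b, hb, hmaxb⟩ := exists_isMaxOn_inner hB hBne u
  rw [supportFun_eq_of_isMaxOn ha hmaxa, supportFun_eq_of_isMaxOn hb hmaxb, ← inner_add_right]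
  refine supportFun_eq_of_isMaxOn (add_mem_add ha hb) (isMaxOn_iff.2 ?_)
  rintro _ ⟨a', ha', b', hb', rfl⟩
  simp only [inner_add_right]
  exact add_le_add (isMaxOn_iff.1 hmaxa a' ha') (isMaxOn_iff.1 hmaxb b' hb')

lemma inner_lt_of_isMaxOn_of_mem_interior (hu : u ≠ 0) (h : IsMaxOn (fun y => ⟪u, y⟫) A z)
    (ho : o ∈ interior A) : ⟪u, o⟫ < ⟪u, z⟫ := by
  have hnear : ∀ᶠ t in 𝓝 (0 : ℝ), o + t • u ∈ A :=
    ((continuous_const.add (continuous_id.smul continuous_const)).tendsto' 0 o (by simp)).eventually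
      (mem_interior_iff_mem_nhds.1 ho)
  have hnear' : ∀ᶠ t in 𝓝[>] (0 : ℝ), o + t • u ∈ A ∧ 0 < t :=
    (hnear.filter_mono nhdsWithin_le_nhds).and self_mem_nhdsWithin
  obtain ⟨t, ht, htpos⟩ := hnear'.exists
  have hle := isMaxOn_iff.1 h _ ht
  rw [inner_add_right, real_inner_smul_right, real_inner_self_eq_norm_sq] at hle
  have : 0 < t * ‖u‖ ^ 2 := mul_pos htpos (by positivity)
  linarith

lemma StrictConvex.eq_of_isMaxOn (hA : StrictConvex ℝ A) (hu : u ≠ 0) {z' : E} (hz : z ∈ A)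
    (hz' : z' ∈ A) (h : IsMaxOn (fun y => ⟪u, y⟫) A z) (h' : IsMaxOn (fun y => ⟪u, y⟫) A z') :
    z = z' := by
  by_contra hne
  have hmid := inner_lt_of_isMaxOn_of_mem_interior hu h
    (hA hz hz' hne (by norm_num : (0 : ℝ) < 1 / 2) (by norm_num : (0 : ℝ) < 1 / 2) (by norm_num))
  have h₁ := isMaxOn_iff.1 h z' hz'
  have h₂ := isMaxOn_iff.1 h' z hz
  rw [inner_add_right, real_inner_smul_right, real_inner_smul_right] at hmid
  linarith

lemma IsMaxOn.inner_smul_add_smul_inter {A' : Set E} (h : IsMaxOn (fun y => ⟪u, y⟫) A z)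
    (h' : IsMaxOn (fun y => ⟪v, y⟫) A' z) {t : ℝ} (ht₀ : 0 ≤ t) (ht₁ : t ≤ 1) :
    IsMaxOn (fun y => ⟪t • u + (1 - t) • v, y⟫) (A ∩ A') z := by
  simpa only [inner_add_left] using ((h.inner_smul_left ht₀).on_subset inter_subset_left).add
    ((h'.inner_smul_left (sub_nonneg.2 ht₁)).on_subset inter_subset_right)

lemma smul_add_smul_ne_zero_of_isMaxOn {A' : Set E} (hu : u ≠ 0) (hv : v ≠ 0)
    (h : IsMaxOn (fun y => ⟪u, y⟫) A z) (h' : IsMaxOn (fun y => ⟪v, y⟫) A' z)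
    (ho : o ∈ interior A) (ho' : o ∈ interior A') {t : ℝ} (ht₀ : 0 ≤ t) (ht₁ : t ≤ 1) :
    t • u + (1 - t) • v ≠ 0 := by
  have hu' := inner_lt_of_isMaxOn_of_mem_interior hu h ho
  have hv' := inner_lt_of_isMaxOn_of_mem_interior hv h' ho'
  intro h0
  have := congrArg (⟪·, z - o⟫) h0
  simp only [inner_add_left, real_inner_smul_left, inner_sub_right, inner_zero_left] at this
  rcases ht₀.eq_or_lt with rfl | htpos
  · nlinarith
  · nlinarith [mul_pos htpos (sub_pos.2 hu'), mul_nonneg (sub_nonneg.2 ht₁) (sub_pos.2 hv').le]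

lemma exists_isMaxOn_inner_of_mem_frontier [CompleteSpace E] (hA : Convex ℝ A)
    (hint : (interior A).Nonempty) (hz : z ∈ frontier A) :
    ∃ u ≠ 0, IsMaxOn (fun y => ⟪u, y⟫) A z := by
  obtain ⟨f, hf, hmax⟩ := geometric_hahn_banach_of_nonempty_interior_point hA hz.2 hint
  exact ⟨(InnerProductSpace.toDual ℝ E).symm f, by simpa using hf,
    isMaxOn_iff.2 fun y hy => by simpa [InnerProductSpace.toDual_symm_apply] using hmax y hy⟩

end SupportFunction

section TwoDimensional

variable {E : Type*} [NormedAddCommGroup E] [InnerProductSpace ℝ E] {B : Set E} {u v w x : E}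

lemma linearIndependent_pair_of_norm_eq_one (hu : ‖u‖ = 1) (hv : ‖v‖ = 1) (h : u ≠ v)
    (h' : u ≠ -v) : LinearIndependent ℝ ![u, v] := by
  rw [LinearIndependent.pair_iff]
  intro a b hab
  have hc₁ : ⟪u, v⟫ ≠ 1 := fun hc => h ((inner_eq_one_iff_of_norm_eq_one (𝕜 := ℝ) hu hv).1 hc)
  have hc₂ : ⟪u, v⟫ ≠ -1 := fun hc => h' <|
    (inner_eq_one_iff_of_norm_eq_one (𝕜 := ℝ) hu (by rw [norm_neg]; exact hv)).1
      (by rw [inner_neg_right, hc, neg_neg])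
  have hc : ⟪u, v⟫ ^ 2 < 1 := by
    have := abs_real_inner_le_norm u v
    rw [hu, hv, one_mul] at this
    have := abs_le.1 this
    nlinarith [lt_of_le_of_ne this.1 (Ne.symm hc₂), lt_of_le_of_ne this.2 hc₁]
  have e₁ := congrArg (⟪u, ·⟫) hab
  have e₂ := congrArg (⟪v, ·⟫) hab
  simp only [inner_add_right, real_inner_smul_right, real_inner_self_eq_norm_sq, hu, hv,
    inner_zero_right, real_inner_comm u v] at e₁ e₂
  have ha : a * (1 - ⟪u, v⟫ ^ 2) = 0 := by linear_combination e₁ - ⟪u, v⟫ * e₂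
  obtain rfl : a = 0 := (mul_eq_zero.1 ha).resolve_right (by linarith)
  exact ⟨rfl, by linear_combination e₂⟩

lemma exists_smul_add_smul_eq (hE : finrank ℝ E = 2) (hli : LinearIndependent ℝ ![u, v]) (x : E) :
    ∃ a b : ℝ, a • u + b • v = x := by
  have hspan := hli.span_eq_top_of_card_eq_finrank (by simp [hE])
  rw [Matrix.range_cons_cons_empty] at hspan
  exact Submodule.mem_span_pair.1 (hspan ▸ Submodule.mem_top)

lemma eq_zero_of_inner_eq_zero_of_linearIndependent (hE : finrank ℝ E = 2)
    (hli : LinearIndependent ℝ ![u, v]) (hu : ⟪u, x⟫ = 0)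
    (hv : ⟪v, x⟫ = 0) : x = 0 := by
  obtain ⟨a, b, hx⟩ := exists_smul_add_smul_eq hE hli x
  rw [← inner_self_eq_zero (𝕜 := ℝ)]
  nth_rewrite 1 [← hx]
  rw [inner_add_left, real_inner_smul_left, real_inner_smul_left, hu, hv]
  ring

lemma supportFun_smul_add_smul_neg (hE : finrank ℝ E = 2) (hBc : IsCompact B)
    (hne : B.Nonempty) (hB0 : (0 : E) ∉ B) (hli : LinearIndependent ℝ ![u, v])
    (hu : supportFun B u ≤ 0) (hv : supportFun B v ≤ 0) {a b : ℝ} (ha : 0 < a) (hb : 0 < b) :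
    supportFun B (a • u + b • v) < 0 := by
  obtain ⟨z, hz, hmax⟩ := exists_isMaxOn_inner hBc hne (a • u + b • v)
  have hzu := (inner_le_supportFun hBc hz u).trans hu
  have hzv := (inner_le_supportFun hBc hz v).trans hv
  rw [supportFun_eq_of_isMaxOn hz hmax, inner_add_left, real_inner_smul_left,
    real_inner_smul_left]
  rcases hzu.lt_or_eq with hzu | hzu
  · nlinarith
  rcases hzv.lt_or_eq with hzv | hzv
  · nlinarith
  exact absurd (eq_zero_of_inner_eq_zero_of_linearIndependent hE hli hzu hzv ▸ hz) hB0

lemma supportFun_smul_nonneg_of_eq_zero (hBc : IsCompact B) (hne : B.Nonempty)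
    (hu : supportFun B u = 0) (t : ℝ) : 0 ≤ supportFun B (t • u) := by
  obtain ⟨z, hz, hmax⟩ := exists_isMaxOn_inner hBc hne u
  have := inner_le_supportFun hBc hz (t • u)
  rwa [real_inner_smul_left, ← supportFun_eq_of_isMaxOn hz hmax, hu, mul_zero] at this

lemma smul_add_smul_ne_smul_of_supportFun_eq_zero (hE : finrank ℝ E = 2) (hBc : IsCompact B)
    (hne : B.Nonempty) (hB0 : (0 : E) ∉ B) (hli : LinearIndependent ℝ ![u, v])
    (hu : supportFun B u ≤ 0) (hv : supportFun B v ≤ 0) (hw : supportFun B w = 0) {a b : ℝ}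
    (ha : 0 < a) (hb : 0 < b) (t : ℝ) : a • u + b • v ≠ t • w := fun h =>
  (supportFun_smul_nonneg_of_eq_zero hBc hne hw t).not_gt
    (h ▸ supportFun_smul_add_smul_neg hE hBc hne hB0 hli hu hv ha hb)

lemma ne_neg_of_supportFun_eq_zero (hE : finrank ℝ E = 2) (hBc : IsCompact B)
    (hne : B.Nonempty) (hB0 : (0 : E) ∉ B) (hv : ‖v‖ = 1) (hw : ‖w‖ = 1)
    (hsu : supportFun B u ≤ 0) (hsv : supportFun B v ≤ 0) (hsw : supportFun B w = 0)
    (hwu : w ≠ u) (hwv : w ≠ v) : u ≠ -v := by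
  rintro rfl
  obtain ⟨z, hz, hmax⟩ := exists_isMaxOn_inner hBc hne w
  have h₁ := (inner_le_supportFun hBc hz v).trans hsv
  have h₂ := (inner_le_supportFun hBc hz (-v)).trans hsu
  rw [inner_neg_left] at h₂
  refine hB0 (eq_zero_of_inner_eq_zero_of_linearIndependent hE
    (linearIndependent_pair_of_norm_eq_one hw hv hwv hwu) ?_ (by linarith) ▸ hz)
  rw [← supportFun_eq_of_isMaxOn hz hmax, hsw]

theorem encard_supportFun_eq_zero_le_two (hE : finrank ℝ E = 2) (hBc : IsCompact B)
    (hne : B.Nonempty) (hB0 : (0 : E) ∉ B) :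
    {w : E | ‖w‖ = 1 ∧ supportFun B w = 0}.encard ≤ 2 := by
  by_contra! h
  obtain ⟨t, hts, ht⟩ := exists_subset_encard_eq (Order.add_one_le_of_lt h)
  obtain ⟨w₁, w₂, w₃, h₁₂, h₁₃, h₂₃, rfl⟩ := encard_eq_three.1 ht
  obtain ⟨⟨hn₁, hs₁⟩, ⟨hn₂, hs₂⟩, ⟨hn₃, hs₃⟩⟩ : (‖w₁‖ = 1 ∧ supportFun B w₁ = 0) ∧
      (‖w₂‖ = 1 ∧ supportFun B w₂ = 0) ∧ (‖w₃‖ = 1 ∧ supportFun B w₃ = 0) :=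
    ⟨hts (by simp), hts (by simp), hts (by simp)⟩
  have a₁₂ := ne_neg_of_supportFun_eq_zero hE hBc hne hB0 hn₂ hn₃ hs₁.le hs₂.le hs₃
    h₁₃.symm h₂₃.symm
  have a₃₁ := ne_neg_of_supportFun_eq_zero hE hBc hne hB0 hn₁ hn₂ hs₃.le hs₁.le hs₂ h₂₃
    h₁₂.symm
  have a₃₂ := ne_neg_of_supportFun_eq_zero hE hBc hne hB0 hn₂ hn₁ hs₃.le hs₂.le hs₁
    h₁₃ h₁₂
  have l₁₂ := linearIndependent_pair_of_norm_eq_one hn₁ hn₂ h₁₂ a₁₂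
  have l₃₁ := linearIndependent_pair_of_norm_eq_one hn₃ hn₁ h₁₃.symm a₃₁
  have l₃₂ := linearIndependent_pair_of_norm_eq_one hn₃ hn₂ h₂₃.symm a₃₂
  obtain ⟨a, b, hab⟩ := exists_smul_add_smul_eq hE l₁₂ w₃
  have ha : a ≠ 0 := by
    rintro rfl
    exact absurd (LinearIndependent.pair_iff.1 l₃₂ (-1) b (by rw [← hab]; module)).1
      (by norm_num)
  have hb : b ≠ 0 := by
    rintro rfl
    exact absurd (LinearIndependent.pair_iff.1 l₃₁ (-1) a (by rw [← hab]; module)).1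
      (by norm_num)
  rcases ha.lt_or_gt with ha | ha <;> rcases hb.lt_or_gt with hb | hb
  · exact smul_add_smul_ne_smul_of_supportFun_eq_zero hE hBc hne hB0 l₁₂ hs₁.le hs₂.le hs₃
      (neg_pos.2 ha) (neg_pos.2 hb) (-1) (by rw [← hab]; module)
  · exact smul_add_smul_ne_smul_of_supportFun_eq_zero hE hBc hne hB0 l₃₁ hs₃.le hs₁.le hs₂
      one_pos (neg_pos.2 ha) b (by rw [← hab]; module)
  · exact smul_add_smul_ne_smul_of_supportFun_eq_zero hE hBc hne hB0 l₃₂ hs₃.le hs₂.le hs₁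
      one_pos (neg_pos.2 hb) a (by rw [← hab]; module)
  · exact smul_add_smul_ne_smul_of_supportFun_eq_zero hE hBc hne hB0 l₁₂ hs₁.le hs₂.le hs₃
      ha hb 1 (by rw [← hab, one_smul])

end TwoDimensional

section UpperBound

variable {E : Type*} [NormedAddCommGroup E] [InnerProductSpace ℝ E] [CompleteSpace E]
  {H B : Set E} {o s : E}

lemma exists_isMaxOn_inter_add_supportFun_eq_zero (hHc : IsCompact H) (hHv : Convex ℝ H)
    (hBc : IsCompact B) (hHBv : Convex ℝ (H + B)) (ho : o ∈ interior (H ∩ (H + B)))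
    (hs₁ : s ∈ frontier H) (hs₂ : s ∈ frontier (H + B)) :
    ∃ w : E, ‖w‖ = 1 ∧ IsMaxOn (fun y => ⟪w, y⟫) (H ∩ (H + B)) s ∧ supportFun B w = 0 := by
  have hHBc : IsCompact (H + B) := hHc.add hBc
  have hoH : o ∈ interior H := interior_mono inter_subset_left ho
  have hoHB : o ∈ interior (H + B) := interior_mono inter_subset_right ho
  have hHne : H.Nonempty := ⟨o, interior_subset hoH⟩
  have hBne : B.Nonempty := Nonempty.of_add_right ⟨o, interior_subset hoHB⟩
  have hsH : s ∈ H := hHc.isClosed.frontier_subset hs₁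
  have hsHB : s ∈ H + B := hHBc.isClosed.frontier_subset hs₂
  obtain ⟨u, hu, hmaxu⟩ := exists_isMaxOn_inner_of_mem_frontier hHv ⟨o, hoH⟩ hs₁
  obtain ⟨v, hv, hmaxv⟩ := exists_isMaxOn_inner_of_mem_frontier hHBv ⟨o, hoHB⟩ hs₂
  have hsupp := supportFun_add hHc hHne hBc hBne
  have hBu : 0 ≤ supportFun B u := by
    have := inner_le_supportFun hHBc hsHB u
    rw [hsupp, supportFun_eq_of_isMaxOn hsH hmaxu] at this
    linarith
  have hBv : supportFun B v ≤ 0 := by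
    have := inner_le_supportFun hHc hsH v
    rw [← supportFun_eq_of_isMaxOn hsHB hmaxv, hsupp] at this
    linarith
  set f : ℝ → ℝ := fun t => supportFun B (t • u + (1 - t) • v)
  have hf : Continuous f := (continuous_supportFun hBc).comp (by fun_prop)
  obtain ⟨t, ⟨ht₀, ht₁⟩, ht⟩ := intermediate_value_Icc zero_le_one hf.continuousOn
    (show (0 : ℝ) ∈ Icc (f 0) (f 1) by simpa [f] using And.intro hBv hBu)
  set w := t • u + (1 - t) • v
  have hmaxw : IsMaxOn (fun y => ⟪w, y⟫) (H ∩ (H + B)) s :=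
    hmaxu.inner_smul_add_smul_inter hmaxv ht₀ ht₁
  have hw : w ≠ 0 := smul_add_smul_ne_zero_of_isMaxOn hu hv hmaxu hmaxv hoH hoHB ht₀ ht₁
  refine ⟨‖w‖⁻¹ • w, norm_smul_inv_norm hw, hmaxw.inner_smul_left (by positivity), ?_⟩
  rw [supportFun_smul hBc hBne (by positivity), show supportFun B w = 0 from ht, mul_zero]

theorem encard_frontier_inter_frontier_add_le_two (hE : finrank ℝ E = 2)
    (hHc : IsCompact H) (hHs : StrictConvex ℝ H) (hBc : IsCompact B) (hB0 : (0 : E) ∉ B)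
    (hHBs : StrictConvex ℝ (H + B)) (hint : (interior (H ∩ (H + B))).Nonempty) :
    (frontier H ∩ frontier (H + B)).encard ≤ 2 := by
  obtain ⟨o, ho⟩ := hint
  have hBne : B.Nonempty := Nonempty.of_add_right ⟨o, (interior_subset ho).2⟩
  have hK : ∀ s ∈ frontier H ∩ frontier (H + B), s ∈ H ∩ (H + B) := fun s hs =>
    ⟨hHc.isClosed.frontier_subset hs.1, (hHc.add hBc).isClosed.frontier_subset hs.2⟩
  choose! w hw using fun s (hs : s ∈ frontier H ∩ frontier (H + B)) =>
    exists_isMaxOn_inter_add_supportFun_eq_zero hHc hHs.convex hBc hHBs.convex ho hs.1 hs.2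
  calc (frontier H ∩ frontier (H + B)).encard
      ≤ {w : E | ‖w‖ = 1 ∧ supportFun B w = 0}.encard :=
        encard_le_encard_of_injOn (fun s hs => ⟨(hw s hs).1, (hw s hs).2.2⟩)
          fun s hs s' hs' hss' => (hHs.inter hHBs).eq_of_isMaxOn
            (norm_ne_zero_iff.1 ((hw s hs).1.symm ▸ one_ne_zero)) (hK s hs) (hK s' hs')
            (hw s hs).2.1 (hss' ▸ (hw s' hs').2.1)
    _ ≤ 2 := encard_supportFun_eq_zero_le_two hE hBc hBne hB0

end UpperBound

section LowerBound

variable {E : Type*} [NormedAddCommGroup E] [InnerProductSpace ℝ E]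

lemma isPreconnected_sphere_diff_singleton (hE : 1 < Module.rank ℝ E) (v : E) :
    IsPreconnected (sphere (0 : E) 1 \ {v}) := by
  by_cases hv : ‖v‖ = 1
  · have h : sphere (0 : E) 1 \ {v} = Subtype.val '' range (stereographic hv).symm := by
      rw [range_stereographic_symm]
      ext x
      simp
    rw [h]
    exact (isPreconnected_range (isOpenEmbedding_stereographic_symm hv).continuous).image _
      continuous_subtype_val.continuousOn
  · rw [sdiff_singleton_eq_self (by simpa using hv)]
    exact isPreconnected_sphere hE 0 1

lemma Convex.isPreconnected_frontier_diff_singleton (hE : 1 < Module.rank ℝ E) {K : Set E}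
    (hK : Convex ℝ K) (hint : (interior K).Nonempty) (hb : Bornology.IsBounded K) (p : E) :
    IsPreconnected (frontier K \ {p}) := by
  obtain ⟨e, -, -, he⟩ := exists_homeomorph_image_interior_closure_frontier_eq_unitBall hK hint hb
  have h : frontier K \ {p} = e.symm '' (sphere 0 1 \ {e p}) := by
    rw [← he, ← image_singleton, ← image_sdiff e.injective]
    exact (e.toEquiv.symm_image_image _).symm
  rw [h]
  exact (isPreconnected_sphere_diff_singleton hE (e p)).image _ e.symm.continuous.continuousOn

lemma exists_mem_frontier_inter_mem_interior {H₁ H₂ : Set E} {o w : E} (h₁v : Convex ℝ H₁)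
    (hK : IsClosed (H₁ ∩ H₂)) (ho : o ∈ interior (H₁ ∩ H₂)) (hw₁ : w ∈ H₁) (hw₂ : w ∉ H₂) :
    ∃ z ∈ frontier (H₁ ∩ H₂), z ∈ interior H₁ := by
  obtain ⟨z, hzseg, hz⟩ := (convex_segment o w).isPreconnected.inter_frontier_nonempty
    ⟨o, left_mem_segment ℝ o w, interior_subset ho⟩ ⟨w, right_mem_segment ℝ o w, fun h => hw₂ h.2⟩
  have hzo : o ≠ z := fun h => hz.2 (h ▸ ho)
  have hzw : w ≠ z := fun h => hw₂ (h ▸ hK.frontier_subset hz).2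
  exact ⟨z, hz, h₁v.openSegment_interior_closure_subset_interior
    (interior_mono inter_subset_left ho) (subset_closure hw₁)
    (mem_openSegment_of_ne_left_right hzo hzw hzseg)⟩

theorem two_le_encard_frontier_inter_frontier (hE : 1 < Module.rank ℝ E) {H₁ H₂ : Set E}
    (h₁c : IsClosed H₁) (h₁v : Convex ℝ H₁) (h₂c : IsClosed H₂) (h₂v : Convex ℝ H₂)
    (hb : Bornology.IsBounded (H₁ ∩ H₂)) (hint : (interior (H₁ ∩ H₂)).Nonempty)
    (h₁₂ : ¬ H₁ ⊆ H₂) (h₂₁ : ¬ H₂ ⊆ H₁) : 2 ≤ (frontier H₁ ∩ frontier H₂).encard := by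
  set S := frontier H₁ ∩ frontier H₂
  obtain ⟨o, ho⟩ := hint
  obtain ⟨w₁, hw₁, hw₁'⟩ := not_subset.1 h₁₂
  obtain ⟨w₂, hw₂, hw₂'⟩ := not_subset.1 h₂₁
  obtain ⟨z₁, hz₁K, hz₁⟩ :=
    exists_mem_frontier_inter_mem_interior h₁v (h₁c.inter h₂c) ho hw₁ hw₁'
  obtain ⟨z₂, hz₂K, hz₂⟩ := exists_mem_frontier_inter_mem_interior (H₂ := H₁) h₂v
    (h₂c.inter h₁c) (inter_comm H₁ H₂ ▸ ho) hw₂ hw₂'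
  rw [inter_comm] at hz₂K
  by_contra! hS
  have hcover : frontier (H₁ ∩ H₂) \ S ⊆ interior H₁ ∪ interior H₂ := by
    rintro z ⟨hz, hzS⟩
    rcases frontier_inter_subset H₁ H₂ hz with ⟨hz₁, hz₂⟩ | ⟨hz₁, hz₂⟩
    · exact Or.inr (self_sdiff_frontier H₂ ▸ ⟨h₂c.closure_subset hz₂, fun h => hzS ⟨hz₁, h⟩⟩)
    · exact Or.inl (self_sdiff_frontier H₁ ▸ ⟨h₁c.closure_subset hz₁, fun h => hzS ⟨h, hz₂⟩⟩)
  have hconn : IsPreconnected (frontier (H₁ ∩ H₂) \ S) := by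
    obtain ⟨p, hp⟩ : ∃ p, frontier (H₁ ∩ H₂) \ S = frontier (H₁ ∩ H₂) \ {p} := by
      rcases encard_le_one_iff_eq.1 (Order.le_of_lt_add_one hS) with hS | ⟨p, hS⟩
      · exact ⟨o, by rw [hS, sdiff_empty, sdiff_singleton_eq_self fun h => h.2 ho]⟩
      · exact ⟨p, by rw [hS]⟩
    rw [hp]
    exact (h₁v.inter h₂v).isPreconnected_frontier_diff_singleton hE ⟨o, ho⟩ hb p
  obtain ⟨z, ⟨hz, -⟩, hz₁, hz₂⟩ := hconn _ _ isOpen_interior isOpen_interior hcover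
    ⟨z₁, ⟨hz₁K, fun h => disjoint_left.1 disjoint_interior_frontier hz₁ h.1⟩, hz₁⟩
    ⟨z₂, ⟨hz₂K, fun h => disjoint_left.1 disjoint_interior_frontier hz₂ h.2⟩, hz₂⟩
  exact hz.2 (by rw [interior_inter]; exact ⟨hz₁, hz₂⟩)

end LowerBound

section Homothets

variable {E : Type*} [NormedAddCommGroup E] [InnerProductSpace ℝ E] {C : Set E} {x₁ x₂ : E}
  {l₁ l₂ : ℝ}

lemma Convex.vadd_smul_eq_add (hC : Convex ℝ C) (x₁ x₂ : E) (h₁ : 0 ≤ l₁) (h : l₁ ≤ l₂) :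
    x₂ +ᵥ l₂ • C = (x₁ +ᵥ l₁ • C) + ((x₂ - x₁) +ᵥ (l₂ - l₁) • C) := by
  rw [vadd_add_vadd, ← hC.add_smul h₁ (sub_nonneg.2 h), add_sub_cancel, add_sub_cancel]

lemma encard_frontier_inter_frontier_homothet_le_two [CompleteSpace E] (hE : finrank ℝ E = 2)
    (hCc : IsCompact C) (hCs : StrictConvex ℝ C) (h₁ : 0 ≤ l₁) (h : l₁ ≤ l₂)
    (hint : (interior ((x₁ +ᵥ l₁ • C) ∩ (x₂ +ᵥ l₂ • C))).Nonempty)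
    (hsub : ¬ x₁ +ᵥ l₁ • C ⊆ x₂ +ᵥ l₂ • C) :
    (frontier (x₁ +ᵥ l₁ • C) ∩ frontier (x₂ +ᵥ l₂ • C)).encard ≤ 2 := by
  have hH₂s : StrictConvex ℝ (x₂ +ᵥ l₂ • C) := hCs.affinity x₂ l₂
  rw [hCs.convex.vadd_smul_eq_add x₁ x₂ h₁ h] at hint hsub hH₂s ⊢
  exact encard_frontier_inter_frontier_add_le_two hE ((hCc.smul l₁).vadd x₁) (hCs.affinity x₁ l₁)
    ((hCc.smul _).vadd _) (fun h0 => hsub (subset_add_left _ h0)) hH₂s hint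

end Homothets

lemma IsStrictConvexDomain.strictConvex {C : Set Plane} (hC : IsStrictConvexDomain C) :
    StrictConvex ℝ C := by
  obtain ⟨⟨-, hCv, -⟩, hfr⟩ := hC
  rw [strictConvex_iff_openSegment_subset]
  intro x hx y hy hxy
  by_cases hxi : x ∈ interior C
  · exact hCv.openSegment_interior_closure_subset_interior hxi (subset_closure hy)
  by_cases hyi : y ∈ interior C
  · exact hCv.openSegment_closure_interior_subset_interior (subset_closure hx) hyi
  exact hfr x ⟨subset_closure hx, hxi⟩ y ⟨subset_closure hy, hyi⟩ hxy

theorem stmt0 (C H1 H2 : Set Plane) (x1 x2 : Plane) (l1 l2 : ℝ)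
    (hC : IsStrictConvexDomain C) (hl1 : 0 < l1) (hl2 : 0 < l2)
    (hH1 : H1 = x1 +ᵥ l1 • C) (hH2 : H2 = x2 +ᵥ l2 • C)
    (hint : (interior (H1 ∩ H2)).Nonempty)
    (hred1 : H1 ∩ H2 ⊂ H1) (hred2 : H1 ∩ H2 ⊂ H2) :
    (frontier H1 ∩ frontier H2).encard = 2 := by
  have hCc : IsCompact C := hC.1.1
  have hCs : StrictConvex ℝ C := hC.strictConvex
  have hE : finrank ℝ Plane = 2 := finrank_euclideanSpace_fin
  have hrank : 1 < Module.rank ℝ Plane := by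
    rw [← Module.finrank_eq_rank, hE]; norm_num
  have h₁₂ : ¬ H1 ⊆ H2 := inter_ssubset_left_iff.1 hred1
  have h₂₁ : ¬ H2 ⊆ H1 := inter_ssubset_right_iff.1 hred2
  subst hH1 hH2
  refine le_antisymm ?_ (two_le_encard_frontier_inter_frontier hrank
    ((hCc.smul l1).vadd x1).isClosed (hCs.affinity x1 l1).convex
    ((hCc.smul l2).vadd x2).isClosed (hCs.affinity x2 l2).convex
    (((hCc.smul l1).vadd x1).isBounded.subset inter_subset_left) hint h₁₂ h₂₁)
  rcases le_total l1 l2 with h | h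
  · exact encard_frontier_inter_frontier_homothet_le_two hE hCc hCs hl1.le h hint h₁₂
  · rw [inter_comm] at hint ⊢
    exact encard_frontier_inter_frontier_homothet_le_two hE hCc hCs hl2.le h hint h₂₁
end

section
/- Let H1 and H2 be translates of a strictly convex domain C in ℝ² (i.e., H2 = H1 + x for some x ≠ 0) whose intersection is proper. If q, r, s are three distinct points in bd(H1) ∩ bd(H2), a contradiction follows; hence |bd(H1) ∩ bd(H2)| = 2. -/
open Pointwise
open scoped RealInnerProductSpace

/-! Write `H₂ = v +ᵥ H₁` and take a nonzero linear functional `f` whose kernel is the line `ℝ v`,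
so that `f` is unchanged by the translation. By strict convexity `f` attains its maximum on
`K = H₁ ∩ H₂` at a single point `p`, and `p` lies on both boundaries: were it interior to `H₁`, it
would maximise `f` on all of `H₂`, whereas the chord of `H₂` from `p` to `p + v` has an interior
midpoint on the level of `p`. The same holds for the minimum, and `f` is not constant on `K`, so
this gives two common boundary points. A third one `q` lies on the line through a point `m` of the
chord joining them, parallel to `v`; there `m` and `m - v` are interior to `H₁` while `q` and
`q - v` are boundary points of `H₁`. A convex set meets a line in an interval whose interior
points lie strictly between its boundary points, and two pairs at the same distance `‖v‖` cannot
be nested strictly. -/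

open Module (finrank)
open Set

theorem frontier_vadd {G α : Type*} [TopologicalSpace α] [AddGroup G] [AddAction G α]
    [ContinuousConstVAdd G α] (c : G) (s : Set α) : frontier (c +ᵥ s) = c +ᵥ frontier s :=
  ((Homeomorph.vadd c).image_frontier s).symm

theorem mem_vadd_set_iff_sub_mem {E : Type*} [AddCommGroup E] {s : Set E} {v x : E} :
    x ∈ v +ᵥ s ↔ x - v ∈ s := by
  rw [mem_vadd_set_iff_neg_vadd_mem, vadd_eq_add, neg_add_eq_sub]

section NormedSpace

variable {E : Type*} [NormedAddCommGroup E] [NormedSpace ℝ E]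

theorem ContinuousLinearMap.not_isMaxOn_of_mem_interior {f : E →L[ℝ] ℝ} (hf : f ≠ 0)
    {s : Set E} {z : E} (hz : z ∈ interior s) : ¬IsMaxOn f s z := fun h =>
  hf ((h.isLocalMax (mem_interior_iff_mem_nhds.mp hz)).hasFDerivAt_eq_zero f.hasFDerivAt)

theorem ContinuousLinearMap.not_isMaxOn_of_openSegment_subset_interior {f : E →L[ℝ] ℝ}
    (hf : f ≠ 0) {s : Set E} {a b : E} (hab : openSegment ℝ a b ⊆ interior s)
    (hfab : f a = f b) : ¬IsMaxOn f s a := by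
  intro h
  have hmid : f (midpoint ℝ a b) = f a := by
    simp only [midpoint_eq_smul_add, map_smul, map_add, ← hfab, smul_eq_mul, invOf_eq_inv]
    ring
  refine f.not_isMaxOn_of_mem_interior hf (hab (midpoint_mem_openSegment a b))
    (isMaxOn_iff.2 fun y hy => ?_)
  rw [hmid]
  exact h hy

theorem IsMaxOn.of_inter_of_mem_interior {f : E → ℝ} {A B : Set E} {p : E}
    (h : IsMaxOn f (A ∩ B) p) (hpA : p ∈ interior A) (hpB : p ∈ B) (hf : ConcaveOn ℝ B f) :
    IsMaxOn f B p :=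
  .of_isLocalMaxOn_of_concaveOn hpB
    (Filter.mem_of_superset (inter_mem_nhdsWithin B (mem_interior_iff_mem_nhds.mp hpA))
      fun _ hy => h ⟨hy.2, hy.1⟩) hf

theorem Convex.mem_interior_or_sub_mem_interior {H : Set E} (hH : Convex ℝ H) {m p v : E}
    (hm : m ∈ interior H) (hmv : m - v ∈ interior H) (hp : p ∈ H) (hpv : p - v ∈ H) {c : ℝ}
    (hc : p = m + c • v) : p ∈ interior H ∨ p - v ∈ interior H := by
  rcases le_or_gt c 0 with hc0 | hc0
  · left
    have h := hH.add_smul_sub_mem_interior hpv hm (t := 1 / (1 - c))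
      ⟨by apply div_pos <;> linarith, by rw [div_le_one] <;> linarith⟩
    have hd : m - (p - v) = (1 - c) • v := by rw [hc]; module
    rwa [hd, smul_smul, one_div_mul_cancel (by linarith), one_smul, sub_add_cancel] at h
  · right
    have h := hH.add_smul_sub_mem_interior hp hmv (t := 1 / (1 + c))
      ⟨by apply div_pos <;> linarith, by rw [div_le_one] <;> linarith⟩
    have hd : m - v - p = (1 + c) • -v := by rw [hc]; module
    rwa [hd, smul_smul, one_div_mul_cancel (by linarith), one_smul, ← sub_eq_add_neg] at h

end NormedSpace

theorem exists_ker_eq_span_singleton {E : Type*} [NormedAddCommGroup E] [InnerProductSpace ℝ E]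
    [FiniteDimensional ℝ E] [Fact (finrank ℝ E = 2)] {v : E} (hv : v ≠ 0) :
    ∃ f : E →L[ℝ] ℝ, f ≠ 0 ∧ LinearMap.ker (f : E →ₗ[ℝ] ℝ) = ℝ ∙ v := by
  let o := (Module.finBasisOfFinrankEq ℝ E (Fact.out : finrank ℝ E = 2)).orientation
  set u := (o.rotation (Real.pi / 2 : ℝ)).symm v
  have hu : u ≠ 0 := by simpa [u] using hv
  refine ⟨innerSL ℝ u, by rwa [Ne, ← norm_eq_zero, innerSL_apply_norm, norm_eq_zero], ?_⟩
  ext w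
  rw [LinearMap.mem_ker, ContinuousLinearMap.coe_coe, innerSL_apply_apply,
    o.inner_eq_zero_iff_eq_zero_or_eq_smul_rotation_pi_div_two,
    LinearIsometryEquiv.apply_symm_apply, Submodule.mem_span_singleton, or_iff_right hu]

instance : Fact (finrank ℝ Plane = 2) := ⟨finrank_euclideanSpace_fin⟩

theorem IsStrictConvexDomain.openSegment_subset_interior {D : Set Plane}
    (hD : IsStrictConvexDomain D) {a b : Plane} (ha : a ∈ D) (hb : b ∈ D) (hab : a ≠ b) :
    openSegment ℝ a b ⊆ interior D := by
  obtain ⟨⟨-, hconv, -⟩, hstrict⟩ := hD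
  by_cases hia : a ∈ interior D
  · exact hconv.openSegment_interior_closure_subset_interior hia (subset_closure hb)
  by_cases hib : b ∈ interior D
  · exact hconv.openSegment_self_interior_subset_interior ha hib
  · exact hstrict a ⟨subset_closure ha, hia⟩ b ⟨subset_closure hb, hib⟩ hab

theorem IsStrictConvexDomain.vadd {D : Set Plane} (hD : IsStrictConvexDomain D) (x : Plane) :
    IsStrictConvexDomain (x +ᵥ D) := by
  obtain ⟨⟨hcomp, hconv, hint⟩, hstrict⟩ := hD
  refine ⟨⟨hcomp.image (continuous_const_vadd x), hconv.vadd x, ?_⟩, ?_⟩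
  · rw [interior_vadd]
    exact hint.vadd_set
  · rw [frontier_vadd, interior_vadd]
    rintro _ ⟨a, ha, rfl⟩ _ ⟨b, hb, rfl⟩ hab
    rw [← vadd_openSegment]
    exact vadd_set_mono (hstrict a ha b hb (ne_of_apply_ne _ hab))

theorem IsStrictConvexDomain.eq_of_isMaxOn_inter {H₁ H₂ : Set Plane}
    (h₁ : IsStrictConvexDomain H₁) (h₂ : IsStrictConvexDomain H₂) {f : Plane →L[ℝ] ℝ}
    (hf : f ≠ 0) {p q : Plane} (hp : p ∈ H₁ ∩ H₂) (hq : q ∈ H₁ ∩ H₂)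
    (hmax : IsMaxOn f (H₁ ∩ H₂) p) (hfq : f q = f p) : q = p := by
  by_contra hne
  refine f.not_isMaxOn_of_openSegment_subset_interior hf ?_ hfq.symm hmax
  rw [interior_inter]
  exact subset_inter (h₁.openSegment_subset_interior hp.1 hq.1 (Ne.symm hne))
    (h₂.openSegment_subset_interior hp.2 hq.2 (Ne.symm hne))

section Translate

variable {H : Set Plane} {v : Plane} {f : Plane →L[ℝ] ℝ}

theorem notMem_interior_of_isMaxOn_inter {A B : Set Plane} (hB : IsStrictConvexDomain B)
    (hf : f ≠ 0) (hv : v ≠ 0) (hfv : f v = 0) (hAB : ∀ x ∈ A, x + v ∈ B) {p : Plane}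
    (hp : p ∈ A ∩ B) (hmax : IsMaxOn f (A ∩ B) p) : p ∉ interior A := fun hpA =>
  f.not_isMaxOn_of_openSegment_subset_interior hf
    (hB.openSegment_subset_interior hp.2 (hAB p hp.1) (by simpa using hv)) (by simp [hfv])
    (hmax.of_inter_of_mem_interior hpA hp.2 (f.toLinearMap.concaveOn hB.1.2.1))

theorem mem_frontier_inter_of_isMaxOn (hH : IsStrictConvexDomain H) (hf : f ≠ 0) (hv : v ≠ 0)
    (hfv : f v = 0) {p : Plane} (hp : p ∈ H ∩ (v +ᵥ H)) (hmax : IsMaxOn f (H ∩ (v +ᵥ H)) p) :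
    p ∈ frontier H ∩ frontier (v +ᵥ H) := by
  refine ⟨⟨subset_closure hp.1, ?_⟩, ⟨subset_closure hp.2, ?_⟩⟩
  · refine notMem_interior_of_isMaxOn_inter (hH.vadd v) hf hv hfv (fun x hx => ?_) hp hmax
    rwa [mem_vadd_set_iff_sub_mem, add_sub_cancel_right]
  · refine notMem_interior_of_isMaxOn_inter hH hf (neg_ne_zero.2 hv) (by simp [hfv])
      (fun x hx => ?_) hp.symm (by rwa [inter_comm])
    rwa [← sub_eq_add_neg, ← mem_vadd_set_iff_sub_mem]

theorem notMem_frontier_inter_of_lt_of_lt (hH : IsStrictConvexDomain H)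
    (hker : LinearMap.ker (f : Plane →ₗ[ℝ] ℝ) = ℝ ∙ v) {a b p : Plane} (ha : a ∈ H ∩ (v +ᵥ H))
    (hb : b ∈ H ∩ (v +ᵥ H)) (hap : f a < f p) (hpb : f p < f b) :
    p ∉ frontier H ∩ frontier (v +ᵥ H) := by
  rintro ⟨hp₁, hp₂⟩
  set t := (f p - f a) / (f b - f a)
  have ht : t ∈ Ioo 0 1 := ⟨div_pos (by linarith) (by linarith), by rw [div_lt_one] <;> linarith⟩
  set m := a + t • (b - a)
  have hab : a ≠ b := ne_of_apply_ne f (by linarith)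
  have hm : m ∈ interior H ∩ interior (v +ᵥ H) := by
    have hseg : m ∈ openSegment ℝ a b := by rw [openSegment_eq_image']; exact ⟨t, ht, rfl⟩
    exact ⟨hH.openSegment_subset_interior ha.1 hb.1 hab hseg,
      (hH.vadd v).openSegment_subset_interior ha.2 hb.2 hab hseg⟩
  have hfm : f m = f p := by
    have : f b - f a ≠ 0 := by linarith
    simp only [m, t, map_add, map_smul, map_sub, smul_eq_mul]
    field_simp
    ring
  obtain ⟨c, hc⟩ : ∃ c : ℝ, c • v = p - m := by
    rw [← Submodule.mem_span_singleton, ← hker, LinearMap.mem_ker]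
    simp [hfm]
  obtain ⟨hm₁, hm₂⟩ := hm
  rw [interior_vadd, mem_vadd_set_iff_sub_mem] at hm₂
  have hp₂' : p - v ∈ H :=
    mem_vadd_set_iff_sub_mem.mp ((hH.vadd v).1.1.isClosed.frontier_subset hp₂)
  rcases hH.1.2.1.mem_interior_or_sub_mem_interior hm₁ hm₂
    (hH.1.1.isClosed.frontier_subset hp₁) hp₂' (by rw [hc]; abel) with h | h
  · exact hp₁.2 h
  · exact hp₂.2 (by rwa [interior_vadd, mem_vadd_set_iff_sub_mem])

theorem encard_frontier_inter_frontier_vadd (hH : IsStrictConvexDomain H) (hv : v ≠ 0)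
    (hint : (interior (H ∩ (v +ᵥ H))).Nonempty) :
    (frontier H ∩ frontier (v +ᵥ H)).encard = 2 := by
  obtain ⟨f, hf, hker⟩ := exists_ker_eq_span_singleton hv
  have hfv : f v = 0 := LinearMap.mem_ker.mp (hker ▸ Submodule.mem_span_singleton_self v)
  set K := H ∩ (v +ᵥ H)
  have hK : IsCompact K := hH.1.1.inter_right (hH.vadd v).1.1.isClosed
  obtain ⟨z, hz⟩ := hint
  obtain ⟨b, hbK, hbmax⟩ := hK.exists_isMaxOn ⟨z, interior_subset hz⟩ f.continuous.continuousOn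
  obtain ⟨a, haK, hamax⟩ :=
    hK.exists_isMaxOn ⟨z, interior_subset hz⟩ (-f).continuous.continuousOn
  have hamin : ∀ y ∈ K, f a ≤ f y := fun y hy => by simpa using hamax hy
  have hab : f a < f b := by
    by_contra! hba
    exact f.not_isMaxOn_of_mem_interior hf hz fun y hy =>
      (hbmax hy).trans (hba.trans (hamin z (interior_subset hz)))
  suffices frontier H ∩ frontier (v +ᵥ H) = {b, a} by
    rw [this, encard_pair (ne_of_apply_ne f hab.ne')]
  refine subset_antisymm (fun p hp => ?_) ?_
  · have hpK : p ∈ K := ⟨hH.1.1.isClosed.frontier_subset hp.1,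
      (hH.vadd v).1.1.isClosed.frontier_subset hp.2⟩
    rcases (isMaxOn_iff.1 hbmax p hpK).eq_or_lt with hpb | hpb
    · exact .inl (hH.eq_of_isMaxOn_inter (hH.vadd v) hf hbK hpK hbmax hpb)
    rcases (hamin p hpK).eq_or_lt with hap | hap
    · exact .inr (hH.eq_of_isMaxOn_inter (hH.vadd v) (neg_ne_zero.2 hf) haK hpK hamax
        (by simp [hap]))
    · exact absurd hp (notMem_frontier_inter_of_lt_of_lt hH hker haK hbK hap hpb)
  · rintro p (rfl | rfl)
    · exact mem_frontier_inter_of_isMaxOn hH hf hv hfv hbK hbmax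
    · exact mem_frontier_inter_of_isMaxOn hH (neg_ne_zero.2 hf) hv (by simp [hfv]) haK hamax

end Translate

theorem stmt1_general (C : Set Plane) (hC : IsStrictConvexDomain C)
    (x1 x2 : Plane) (hx : x1 ≠ x2)
    (H1 H2 : Set Plane) (hH1 : H1 = x1 +ᵥ C) (hH2 : H2 = x2 +ᵥ C)
    (hint : (interior (H1 ∩ H2)).Nonempty) :
    (frontier H1 ∩ frontier H2).encard = 2 := by
  have hH2' : H2 = (x2 - x1) +ᵥ H1 := by rw [hH2, hH1, vadd_vadd, sub_add_cancel]
  subst hH1 hH2'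
  exact encard_frontier_inter_frontier_vadd (hC.vadd x1) (sub_ne_zero.2 hx.symm) hint

theorem stmt1 (C : Set Plane) (hC : IsStrictConvexDomain C)
    (x1 x2 : Plane) (hx : x1 ≠ x2)
    (H1 H2 : Set Plane) (hH1 : H1 = x1 +ᵥ C) (hH2 : H2 = x2 +ᵥ C)
    (hint : (interior (H1 ∩ H2)).Nonempty)
    (hred1 : H1 ∩ H2 ⊂ H1) (hred2 : H1 ∩ H2 ⊂ H2) :
    (frontier H1 ∩ frontier H2).encard = 2 :=
  stmt1_general C hC x1 x2 hx H1 H2 hH1 hH2 hint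
end

section
/- Let H = ⋂ᵢ₌₁ⁿ Hᵢ be a proper intersection of homothets of a smooth strictly convex domain C in ℝ², with n ≥ 2. If v ∈ bd(H) lies on the boundaries of at least two of the generating homothets, then v is a singular point of H, i.e., H admits at least two distinct supporting lines at v. -/
open Pointwise
open scoped RealInnerProductSpace

/-!
Each generating homothet is convex, so it has a supporting line at `v`, and a supporting line
of `H i` at `v` also supports the intersection. It remains to see that `H i` and `H j` cannot
have the same outer normal `u` at `v`. If they did, then writing `v = x i + l i • cᵢ` and
`v = x j + l j • cⱼ`, both `cᵢ` and `cⱼ` would maximize `⟪u, ·⟫` on `C`; by strict convexity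
they coincide, so `H i` and `H j` are homothetic with respect to the centre `v` and one contains
the other. Then one of them could be removed without changing the intersection, contradicting
properness.
-/

open Set

section

variable {E : Type*}

theorem Set.iInter_eq_biInter_ne_of_subset {ι α : Type*} {H : ι → Set α} {i j : ι}
    (hij : i ≠ j) (hsub : H i ⊆ H j) : ⋂ k ∈ {k | k ≠ j}, H k = ⋂ k, H k := by
  refine Subset.antisymm (fun z hz => mem_iInter.2 fun k => ?_) (fun z hz => ?_)
  · rw [mem_iInter₂] at hz
    obtain rfl | hk := eq_or_ne k j
    · exact hsub (hz i hij)
    · exact hz k hk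
  · exact mem_iInter₂.2 fun k _ => mem_iInter.1 hz k

theorem Convex.vadd_smul_subset_vadd_smul [AddCommGroup E] [Module ℝ E] {C : Set E}
    (hC : Convex ℝ C) {x₁ x₂ c : E} {l₁ l₂ : ℝ} (hl₁ : 0 < l₁) (hl : l₁ ≤ l₂) (hc : c ∈ C)
    (hx : x₁ + l₁ • c = x₂ + l₂ • c) : x₁ +ᵥ l₁ • C ⊆ x₂ +ᵥ l₂ • C := by
  rintro _ ⟨_, ⟨w, hw, rfl⟩, rfl⟩
  have hl₂ : 0 < l₂ := hl₁.trans_le hl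
  refine ⟨l₂ • ((1 - l₁ / l₂) • c + (l₁ / l₂) • w),
    smul_mem_smul_set (hC hc hw (by rw [sub_nonneg, div_le_one hl₂]; exact hl)
      (by positivity) (by ring)), ?_⟩
  change x₂ + l₂ • _ = x₁ + l₁ • w
  rw [smul_add, smul_smul, smul_smul, mul_sub, mul_one,
    mul_div_cancel₀ _ hl₂.ne', eq_sub_of_add_eq hx.symm]
  module

variable [NormedAddCommGroup E] [InnerProductSpace ℝ E]

theorem inner_lt_of_mem_interior {C : Set E} {u : E} {a : ℝ} (hu : u ≠ 0)
    (hC : ∀ y ∈ C, ⟪u, y⟫ ≤ a) {z : E} (hz : z ∈ interior C) : ⟪u, z⟫ < a := by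
  have hopen : IsOpen (innerSL ℝ u '' interior C) :=
    (innerSL ℝ u).isOpenMap_of_ne_zero
      (by rw [← norm_ne_zero_iff, innerSL_apply_norm, norm_ne_zero_iff]; exact hu) _ isOpen_interior
  have hsub : innerSL ℝ u '' interior C ⊆ interior (Iic a) :=
    interior_maximal (image_subset_iff.2 fun y hy => hC y (interior_subset hy)) hopen
  simpa using hsub (mem_image_of_mem _ hz)

end

theorem IsConvexDomain.vadd_smul {C : Set Plane} (hC : IsConvexDomain C) (x : Plane) {l : ℝ}
    (hl : 0 < l) : IsConvexDomain (x +ᵥ l • C) := by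
  obtain ⟨hcomp, hconv, hint⟩ := hC
  refine ⟨(hcomp.smul l).vadd x, (hconv.smul l).vadd x, ?_⟩
  rw [interior_vadd, interior_smul₀ hl.ne']
  exact (hint.smul_set).vadd_set

theorem IsOuterNormalAt.mono {K L : Set Plane} {x u : Plane} (h : IsOuterNormalAt L x u)
    (hKL : K ⊆ L) : IsOuterNormalAt K x u :=
  ⟨h.1, fun y hy => h.2 y (hKL hy)⟩

theorem IsOuterNormalAt.ne_zero {K : Set Plane} {x u : Plane} (h : IsOuterNormalAt K x u) :
    u ≠ 0 :=
  norm_ne_zero_iff.1 (h.1.symm ▸ one_ne_zero)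

theorem IsOuterNormalAt.mem_frontier {K : Set Plane} {x u : Plane} (h : IsOuterNormalAt K x u)
    (hx : x ∈ K) : x ∈ frontier K :=
  ⟨subset_closure hx, fun hint =>
    (inner_lt_of_mem_interior h.ne_zero h.2 hint).false⟩

theorem exists_isOuterNormalAt_of_notMem_interior {K : Set Plane} (hK : Convex ℝ K)
    (hKint : (interior K).Nonempty) {v : Plane} (hv : v ∉ interior K) :
    ∃ u, IsOuterNormalAt K v u := by
  obtain ⟨f, hf, hmax⟩ := geometric_hahn_banach_of_nonempty_interior_point hK hv hKint
  set w := (InnerProductSpace.toDual ℝ Plane).symm f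
  have hw : w ≠ 0 := by simpa [w] using hf
  refine ⟨‖w‖⁻¹ • w, by simp [norm_smul, hw], fun y hy => ?_⟩
  rw [real_inner_smul_left, real_inner_smul_left]
  gcongr
  simpa [w, InnerProductSpace.toDual_symm_apply] using hmax y hy

theorem isOuterNormalAt_vadd_smul_iff {C : Set Plane} {x c u : Plane} {l : ℝ} (hl : 0 < l) :
    IsOuterNormalAt (x +ᵥ l • C) (x + l • c) u ↔ IsOuterNormalAt C c u := by
  simp only [IsOuterNormalAt, ← image_smul, ← image_vadd, image_image, forall_mem_image,
    vadd_eq_add, inner_add_right, real_inner_smul_right, add_le_add_iff_left,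
    mul_le_mul_iff_right₀ hl]

theorem IsStrictConvexDomain.eq_of_isOuterNormalAt {C : Set Plane} (hC : IsStrictConvexDomain C)
    {c₁ c₂ u : Plane} (hc₁ : c₁ ∈ C) (hc₂ : c₂ ∈ C) (h₁ : IsOuterNormalAt C c₁ u)
    (h₂ : IsOuterNormalAt C c₂ u) : c₁ = c₂ := by
  by_contra hne
  have hmid : (1 / 2 : ℝ) • c₁ + (1 / 2 : ℝ) • c₂ ∈ interior C :=
    hC.2 c₁ (h₁.mem_frontier hc₁) c₂ (h₂.mem_frontier hc₂) hne
      ⟨1 / 2, 1 / 2, by norm_num, by norm_num, by norm_num, rfl⟩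
  have hlt := inner_lt_of_mem_interior h₁.ne_zero h₁.2 hmid
  have heq : ⟪u, c₁⟫ = ⟪u, c₂⟫ := le_antisymm (h₂.2 c₁ hc₁) (h₁.2 c₂ hc₂)
  rw [inner_add_right, real_inner_smul_right, real_inner_smul_right, ← heq] at hlt
  linarith

theorem IsStrictConvexDomain.vadd_smul_subset_or_subset {C : Set Plane}
    (hC : IsStrictConvexDomain C) {x₁ x₂ v u : Plane} {l₁ l₂ : ℝ} (hl₁ : 0 < l₁)
    (hl₂ : 0 < l₂) (hv₁ : v ∈ x₁ +ᵥ l₁ • C) (hv₂ : v ∈ x₂ +ᵥ l₂ • C)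
    (h₁ : IsOuterNormalAt (x₁ +ᵥ l₁ • C) v u) (h₂ : IsOuterNormalAt (x₂ +ᵥ l₂ • C) v u) :
    x₁ +ᵥ l₁ • C ⊆ x₂ +ᵥ l₂ • C ∨ x₂ +ᵥ l₂ • C ⊆ x₁ +ᵥ l₁ • C := by
  obtain ⟨_, ⟨c₁, hc₁, rfl⟩, hv₁⟩ := hv₁
  obtain ⟨_, ⟨c₂, hc₂, rfl⟩, rfl⟩ := hv₂
  change x₁ + l₁ • c₁ = x₂ + l₂ • c₂ at hv₁
  change IsOuterNormalAt _ (x₂ + l₂ • c₂) u at h₁ h₂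
  rw [← hv₁, isOuterNormalAt_vadd_smul_iff hl₁] at h₁
  rw [isOuterNormalAt_vadd_smul_iff hl₂] at h₂
  obtain rfl := hC.eq_of_isOuterNormalAt hc₁ hc₂ h₁ h₂
  rcases le_total l₁ l₂ with hl | hl
  · exact .inl (hC.1.2.1.vadd_smul_subset_vadd_smul hl₁ hl hc₁ hv₁)
  · exact .inr (hC.1.2.1.vadd_smul_subset_vadd_smul hl₂ hl hc₁ hv₁.symm)

theorem stmt6_general (C : Set Plane) (hC : IsStrictConvexDomain C)
    (n : ℕ) (x : Fin n → Plane) (l : Fin n → ℝ) (hl : ∀ i, 0 < l i)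
    (H : Fin n → Set Plane) (hH : ∀ i, H i = x i +ᵥ l i • C)
    (hred : ∀ j : Fin n, (⋂ i, H i) ⊂ ⋂ i ∈ {i : Fin n | i ≠ j}, H i)
    (v : Plane) (hv : v ∈ frontier (⋂ i, H i))
    (i j : Fin n) (hij : i ≠ j) (hvi : v ∈ frontier (H i)) (hvj : v ∈ frontier (H j)) :
    IsSingularPt (⋂ i, H i) v := by
  have hdom (k : Fin n) : IsConvexDomain (H k) := hH k ▸ hC.1.vadd_smul (x k) (hl k)
  have hvH : v ∈ ⋂ k, H k := (isClosed_iInter fun k => (hdom k).1.isClosed).frontier_subset hv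
  obtain ⟨ui, hui⟩ := exists_isOuterNormalAt_of_notMem_interior (hdom i).2.1 (hdom i).2.2 hvi.2
  obtain ⟨uj, huj⟩ := exists_isOuterNormalAt_of_notMem_interior (hdom j).2.1 (hdom j).2.2 hvj.2
  refine ⟨hv, ui, uj, ?_, hui.mono (iInter_subset H i), huj.mono (iInter_subset H j)⟩
  rintro rfl
  have hnested : H i ⊆ H j ∨ H j ⊆ H i := by
    simp only [hH] at hui huj hvH ⊢
    exact hC.vadd_smul_subset_or_subset (hl i) (hl j) (mem_iInter.1 hvH i)
      (mem_iInter.1 hvH j) hui huj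
  rcases hnested with h | h
  · exact (hred j).ne (iInter_eq_biInter_ne_of_subset hij h).symm
  · exact (hred i).ne (iInter_eq_biInter_ne_of_subset hij.symm h).symm

theorem stmt6 (C : Set Plane) (hC : IsStrictConvexDomain C) (hCs : IsSmoothDomain C)
    (n : ℕ) (hn : 2 ≤ n) (x : Fin n → Plane) (l : Fin n → ℝ) (hl : ∀ i, 0 < l i)
    (H : Fin n → Set Plane) (hH : ∀ i, H i = x i +ᵥ l i • C)
    (hint : (interior (⋂ i, H i)).Nonempty)
    (hred : ∀ j : Fin n, (⋂ i, H i) ⊂ ⋂ i ∈ {i : Fin n | i ≠ j}, H i)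
    (v : Plane) (hv : v ∈ frontier (⋂ i, H i))
    (i j : Fin n) (hij : i ≠ j) (hvi : v ∈ frontier (H i)) (hvj : v ∈ frontier (H j)) :
    IsSingularPt (⋂ i, H i) v :=
  stmt6_general C hC n x l hl H hH hred v hv i j hij hvi hvj
end

section
/- Let H = ⋂ᵢ₌₁ⁿ Hᵢ be a proper intersection of n ≥ 2 homothets of a strictly convex domain C in ℝ². Then for each index j, the boundary of Hⱼ meets the interior of Wⱼ = ⋂_{i≠j} Hᵢ, i.e., bd(Hⱼ) ∩ int(Wⱼ) ≠ ∅. -/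
/-! Pick `q` in the interior of the whole intersection and `p ∈ Wⱼ \ Hⱼ`. The segment `[q, p]`
starts in `int Hⱼ` and ends outside the closed set `Hⱼ`, so it crosses `bd Hⱼ` at a point
`z ≠ q, p`; as `q ∈ int Wⱼ`, `p ∈ Wⱼ` and `Wⱼ` is convex, `z ∈ int Wⱼ`. -/

open Pointwise
open scoped RealInnerProductSpace

theorem IsPreconnected.inter_frontier_nonempty_s9 {α : Type*} [TopologicalSpace α] {s t : Set α}
    (hs : IsPreconnected s) (hst : (s ∩ t).Nonempty) (hst' : (s \ t).Nonempty) :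
    (s ∩ frontier t).Nonempty := by
  by_contra h
  have hsplit : s ⊆ interior t ∪ (closure t)ᶜ := fun z hz => by
    by_cases hzt : z ∈ closure t
    · exact Or.inl (by_contra fun hzi => h ⟨z, hz, hzt, hzi⟩)
    · exact Or.inr hzt
  obtain ⟨a, has, hat⟩ := hst
  obtain ⟨b, hbs, hbt⟩ := hst'
  have ha : a ∈ interior t :=
    (hsplit has).resolve_right fun hac => hac (subset_closure hat)
  have hb : b ∈ (closure t)ᶜ :=
    (hsplit hbs).resolve_left fun hbi => hbt (interior_subset hbi)
  obtain ⟨z, -, hzi, hzc⟩ := hs _ _ isOpen_interior isClosed_closure.isOpen_compl hsplit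
    ⟨a, has, ha⟩ ⟨b, hbs, hb⟩
  exact hzc (subset_closure (interior_subset hzi))

theorem Convex.frontier_inter_interior_nonempty {E : Type*} [AddCommGroup E] [Module ℝ E]
    [TopologicalSpace E] [IsTopologicalAddGroup E] [ContinuousSMul ℝ E] {S W : Set E}
    (hS : IsClosed S) (hW : Convex ℝ W) {q p : E} (hqS : q ∈ interior S) (hqW : q ∈ interior W)
    (hpW : p ∈ W) (hpS : p ∉ S) : (frontier S ∩ interior W).Nonempty := by
  obtain ⟨z, hz, hzS⟩ := (convex_segment q p).isPreconnected.inter_frontier_nonempty_s9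
    ⟨q, left_mem_segment ℝ q p, interior_subset hqS⟩ ⟨p, right_mem_segment ℝ q p, hpS⟩
  have hqz : q ≠ z := by
    rintro rfl
    exact hzS.2 hqS
  have hpz : p ≠ z := by
    rintro rfl
    exact hpS (hS.frontier_subset hzS)
  exact ⟨z, hzS, hW.openSegment_interior_closure_subset_interior hqW (subset_closure hpW)
    (mem_openSegment_of_ne_left_right hqz hpz hz)⟩

theorem Set.mem_iInter_of_mem_biInter_ne {ι α : Type*} {s : ι → Set α} {j : ι} {a : α}
    (hj : a ∈ s j) (h : a ∈ ⋂ i ∈ {i | i ≠ j}, s i) : a ∈ ⋂ i, s i :=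
  Set.mem_iInter.2 fun i => by
    by_cases hij : i = j
    · exact hij ▸ hj
    · exact Set.mem_iInter₂.1 h i hij

theorem stmt9_general (C : Set Plane) (hC : IsStrictConvexDomain C)
    (n : ℕ) (x : Fin n → Plane) (l : Fin n → ℝ)
    (H : Fin n → Set Plane) (hH : ∀ i, H i = x i +ᵥ l i • C)
    (hint : (interior (⋂ i, H i)).Nonempty)
    (hred : ∀ j : Fin n, (⋂ i, H i) ⊂ ⋂ i ∈ {i : Fin n | i ≠ j}, H i) :
    ∀ j : Fin n, (frontier (H j) ∩ interior (⋂ i ∈ {i : Fin n | i ≠ j}, H i)).Nonempty := by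
  intro j
  obtain ⟨hCcompact, hCconvex, -⟩ := hC.1
  have hHj_closed : IsClosed (H j) := hH j ▸ ((hCcompact.smul (l j)).vadd (x j)).isClosed
  have hW_convex : Convex ℝ (⋂ i ∈ {i : Fin n | i ≠ j}, H i) :=
    convex_iInter₂ fun i _ => hH i ▸ (hCconvex.smul (l i)).vadd (x i)
  obtain ⟨q, hq⟩ := hint
  obtain ⟨p, hpW, hpH⟩ := Set.exists_of_ssubset (hred j)
  exact hW_convex.frontier_inter_interior_nonempty hHj_closed
    (interior_mono (Set.iInter_subset _ j) hq) (interior_mono (hred j).1 hq) hpW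
    fun hpj => hpH (Set.mem_iInter_of_mem_biInter_ne hpj hpW)

theorem stmt9 (C : Set Plane) (hC : IsStrictConvexDomain C)
    (n : ℕ) (hn : 2 ≤ n) (x : Fin n → Plane) (l : Fin n → ℝ) (hl : ∀ i, 0 < l i)
    (H : Fin n → Set Plane) (hH : ∀ i, H i = x i +ᵥ l i • C)
    (hint : (interior (⋂ i, H i)).Nonempty)
    (hred : ∀ j : Fin n, (⋂ i, H i) ⊂ ⋂ i ∈ {i : Fin n | i ≠ j}, H i) :
    ∀ j : Fin n, (frontier (H j) ∩ interior (⋂ i ∈ {i : Fin n | i ≠ j}, H i)).Nonempty :=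
  stmt9_general C hC n x l H hH hint hred
end

section
/- Let C be a smooth strictly convex domain in ℝ² and let T1 = C and T2 = C + x (x ≠ 0) be two translates whose intersection is proper. Then the Gauss image of the set of boundary points of T1 lying outside T2 (i.e., bd(T1) \ T2) contains a closed half-circle of unit normal directions; in particular it contains both unit vectors perpendicular to x. -/
open Pointwise
open scoped RealInnerProductSpace

/-!
A unit vector `u` with `⟪u, x⟫ ≤ 0` is the outer normal of `C` at a maximizer `p` of `⟪u, ·⟫`
on `C`. If `p` also lay in `x +ᵥ C`, then `p - x ∈ C` with `⟪u, p - x⟫ ≥ ⟪u, p⟫` would be a second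
maximizer. Both lie on the boundary, since a nonzero linear functional has no local maximum, so by
strict convexity their midpoint is an interior maximizer, which is impossible.
-/

namespace ContinuousLinearMap

variable {E : Type*} [NormedAddCommGroup E] [NormedSpace ℝ E] {f : E →L[ℝ] ℝ} {s : Set E}
  {p q : E}

theorem notMem_interior_of_isMaxOn (hf : f ≠ 0) (hp : IsMaxOn f s p) : p ∉ interior s :=
  fun hps => hf ((hp.isLocalMax (mem_interior_iff_mem_nhds.1 hps)).hasFDerivAt_eq_zero
    f.hasFDerivAt)

theorem mem_frontier_of_isMaxOn (hf : f ≠ 0) (hps : p ∈ s) (hp : IsMaxOn f s p) :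
    p ∈ frontier s :=
  ⟨subset_closure hps, notMem_interior_of_isMaxOn hf hp⟩

theorem eq_of_isMaxOn_of_openSegment_subset_interior (hf : f ≠ 0)
    (hs : ∀ x ∈ frontier s, ∀ y ∈ frontier s, x ≠ y → openSegment ℝ x y ⊆ interior s)
    (hps : p ∈ s) (hqs : q ∈ s) (hp : IsMaxOn f s p) (hq : IsMaxOn f s q) : p = q := by
  by_contra hpq
  have hfpq : f p = f q := le_antisymm (hq hps) (hp hqs)
  set m : E := (1 / 2 : ℝ) • p + (1 / 2 : ℝ) • q
  have hm_int : m ∈ interior s :=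
    hs p (mem_frontier_of_isMaxOn hf hps hp) q (mem_frontier_of_isMaxOn hf hqs hq) hpq
      ⟨1 / 2, 1 / 2, by norm_num, by norm_num, by norm_num, rfl⟩
  have hm_max : IsMaxOn f s m := by
    intro y hy
    have hfm : f m = f p := by simp only [m, map_add, map_smul, smul_eq_mul, hfpq]; ring
    simpa only [hfm] using hp hy
  exact notMem_interior_of_isMaxOn hf hm_max hm_int

end ContinuousLinearMap

theorem stmt13_general (C : Set Plane) (hC : IsStrictConvexDomain C)
    (x : Plane) (hx : x ≠ 0)
    (T1 T2 : Set Plane) (hT1 : T1 = C) (hT2 : T2 = x +ᵥ C) :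
    ∀ u : Plane, ‖u‖ = 1 → (inner ℝ u x : ℝ) ≤ 0 →
      ∃ p ∈ frontier T1 \ T2, IsOuterNormalAt T1 p u := by
  subst T1 T2
  obtain ⟨⟨hcomp, -, hne⟩, hstrict⟩ := hC
  intro u hu hux
  have hf : innerSL ℝ u ≠ 0 := by
    rw [← norm_ne_zero_iff, innerSL_apply_norm, hu]; exact one_ne_zero
  obtain ⟨p, hpC, hpmax⟩ :=
    hcomp.exists_isMaxOn (hne.mono interior_subset) (innerSL ℝ u).continuous.continuousOn
  refine ⟨p, ⟨ContinuousLinearMap.mem_frontier_of_isMaxOn hf hpC hpmax, fun hpx => hx ?_⟩,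
    hu, hpmax⟩
  have hqC : -x +ᵥ p ∈ C := Set.mem_vadd_set_iff_neg_vadd_mem.1 hpx
  have hqmax : IsMaxOn (innerSL ℝ u) C (-x +ᵥ p) := isMaxOn_iff.2 fun y hy => by
    have hy' := isMaxOn_iff.1 hpmax y hy
    simp only [innerSL_apply_apply, vadd_eq_add, inner_add_right, inner_neg_right] at hy' ⊢
    linarith
  have hpq := ContinuousLinearMap.eq_of_isMaxOn_of_openSegment_subset_interior hf hstrict
    hpC hqC hpmax hqmax
  simpa using congrArg (· - p) hpq

theorem stmt13 (C : Set Plane) (hC : IsStrictConvexDomain C) (hCs : IsSmoothDomain C)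
    (x : Plane) (hx : x ≠ 0)
    (T1 T2 : Set Plane) (hT1 : T1 = C) (hT2 : T2 = x +ᵥ C)
    (hint : (interior (T1 ∩ T2)).Nonempty)
    (hred1 : T1 ∩ T2 ⊂ T1) (hred2 : T1 ∩ T2 ⊂ T2) :
    ∀ u : Plane, ‖u‖ = 1 → (inner ℝ u x : ℝ) ≤ 0 →
      ∃ p ∈ frontier T1 \ T2, IsOuterNormalAt T1 p u :=
  stmt13_general C hC x hx T1 T2 hT1 hT2
end
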